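/- Let c* ∈ ℝ be such that the minimum of x ↦ d·x over X^ε is attained and equals c* (i.e., there exists x₀ ∈ X^ε with d·x₀ = c*, and d·x ≥ c* for all x ∈ X^ε). Assume moreover that for every c < c* there exists x ∈ X with d·x = c. Say that c ∈ ℝ is a non-implied necessary condition parameter if φ_d^c is a necessary condition for ε-optimality and for every c' ≠ c such that φ_d^{c'} is a necessary condition for ε-optimality, the truth set {x ∈ X | d·x ≥ c'} is not contained in the truth set {x ∈ X | d·x ≥ c}. Then the set of non-implied necessary condition parameters is exactly {c*}. -/

import Mathlib

/-!
Among necessary conditions `c ≤ g x` on `S`, every parameter satisfies `c ≤ c*`, since `c*` is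
attained on `S`; thus the truth set of `c*` is contained in that of any other necessary `c`, so no
`c ≠ c*` is non-implied. Conversely, for `c' < c*` some `x ∈ X` has `g x = c'`, which lies in the
truth set of `c'` but not in that of `c*`.
-/

section

variable {α β : Type*} [LinearOrder β] {X : Set α} {g : α → β}

lemma setOf_le_subset_setOf_le {c c' : β} (h : c ≤ c') :
    {x ∈ X | c' ≤ g x} ⊆ {x ∈ X | c ≤ g x} :=
  fun _ hx => ⟨hx.1, h.trans hx.2⟩

lemma not_setOf_le_subset_setOf_le {c c' : β} (h : c' < c) (hc' : ∃ x ∈ X, g x = c') :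
    ¬ {x ∈ X | c' ≤ g x} ⊆ {x ∈ X | c ≤ g x} := by
  obtain ⟨x, hxX, rfl⟩ := hc'
  exact fun hsub => (hsub ⟨hxX, le_rfl⟩).2.not_gt h

theorem setOf_nonimplied_lowerBound_eq_singleton {S : Set α} {cstar : β}
    (hattained : ∃ x₀ ∈ S, g x₀ = cstar) (hlb : ∀ x ∈ S, cstar ≤ g x)
    (hdense : ∀ c < cstar, ∃ x ∈ X, g x = c) :
    {c : β | (∀ x ∈ S, c ≤ g x) ∧
      ∀ c' : β, c' ≠ c → (∀ x ∈ S, c' ≤ g x) →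
        ¬ ({x ∈ X | c' ≤ g x} ⊆ {x ∈ X | c ≤ g x})} = {cstar} := by
  obtain ⟨x₀, hx₀, rfl⟩ := hattained
  have le_of_lowerBound : ∀ c, (∀ x ∈ S, c ≤ g x) → c ≤ g x₀ := fun c hc => hc x₀ hx₀
  ext c
  constructor
  · rintro ⟨hnec, hni⟩
    by_contra hne
    exact hni _ (Ne.symm hne) hlb (setOf_le_subset_setOf_le (le_of_lowerBound c hnec))
  · rintro rfl
    refine ⟨hlb, fun c' hne hnec => ?_⟩
    have hlt : c' < g x₀ := (le_of_lowerBound c' hnec).lt_of_ne hne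
    exact not_setOf_le_subset_setOf_le hlt (hdense c' hlt)

end

theorem stmt5_general {n : ℕ} (X : Set (Fin n → ℝ))
    (d : Fin n → ℝ)
    (Xeps : Set (Fin n → ℝ))
    (cstar : ℝ)
    (hattained : ∃ x₀ ∈ Xeps, d ⬝ᵥ x₀ = cstar)
    (hlb : ∀ x ∈ Xeps, cstar ≤ d ⬝ᵥ x)
    (hdense : ∀ c : ℝ, c < cstar → ∃ x ∈ X, d ⬝ᵥ x = c) :
    {c : ℝ | (∀ x ∈ Xeps, c ≤ d ⬝ᵥ x) ∧
      ∀ c' : ℝ, c' ≠ c → (∀ x ∈ Xeps, c' ≤ d ⬝ᵥ x) →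
        ¬ ({x ∈ X | c' ≤ d ⬝ᵥ x} ⊆ {x ∈ X | c ≤ d ⬝ᵥ x})} = {cstar} :=
  setOf_nonimplied_lowerBound_eq_singleton hattained hlb hdense

/-- Under attainment of the minimum `c*` of `x ↦ d·x` over `X^ε`
and realisability of every `c < c*` over `X`, the set of "non-implied necessary
condition parameters" (parameters `c` such that `φ_d^c` is a necessary condition
for ε-optimality and no other necessary condition `φ_d^{c'}`, `c' ≠ c`, has its
truth set contained in that of `φ_d^c`) is exactly `{c*}`. -/
theorem stmt5 {n : ℕ} (X : Set (Fin n → ℝ)) (f : (Fin n → ℝ) → ℝ)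
    (xstar : Fin n → ℝ) (hxstar : xstar ∈ X)
    (hopt : ∀ x ∈ X, f xstar ≤ f x) (hf0 : 0 ≤ f xstar)
    (ε : ℝ) (hε : 0 ≤ ε)
    (d : Fin n → ℝ) (hd : ∀ i, d i = 0 ∨ d i = 1)
    (Xeps : Set (Fin n → ℝ))
    (hXeps : Xeps = {x ∈ X | f x ≤ (1 + ε) * f xstar})
    (cstar : ℝ)
    (hattained : ∃ x₀ ∈ Xeps, d ⬝ᵥ x₀ = cstar)
    (hlb : ∀ x ∈ Xeps, cstar ≤ d ⬝ᵥ x)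
    (hdense : ∀ c : ℝ, c < cstar → ∃ x ∈ X, d ⬝ᵥ x = c) :
    {c : ℝ | (∀ x ∈ Xeps, c ≤ d ⬝ᵥ x) ∧
      ∀ c' : ℝ, c' ≠ c → (∀ x ∈ Xeps, c' ≤ d ⬝ᵥ x) →
        ¬ ({x ∈ X | c' ≤ d ⬝ᵥ x} ⊆ {x ∈ X | c ≤ d ⬝ᵥ x})} = {cstar} :=
  stmt5_general X d Xeps cstar hattained hlb hdense
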